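/- arXiv:1807.00321 — 2 statements merged into one kernel-verified Lean document; each statement's English description precedes it below -/
import Mathlib

section
/- Let K ⊆ ℝⁿ be a nonempty closed convex set and P a polynomial map of degree d with Sol(K^∞, P^∞) = {0} and Sol(K,P) ≠ ∅. Then the set-valued solution map Q ↦ Sol(K,Q) from P_d to subsets of ℝⁿ is upper semicontinuous at P: for every open set V ⊇ Sol(K,P) there is ε > 0 such that Sol(K,Q) ⊆ V whenever ‖Q − P‖ < ε. -/
open scoped RealInnerProductSpace
open MvPolynomial Bornology

/-- Solution set of the variational inequality VI(K,F). -/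
def Sol {n : ℕ} (K : Set (EuclideanSpace ℝ (Fin n)))
    (F : EuclideanSpace ℝ (Fin n) → EuclideanSpace ℝ (Fin n)) :
    Set (EuclideanSpace ℝ (Fin n)) :=
  {x | x ∈ K ∧ ∀ y ∈ K, 0 ≤ ⟪F x, y - x⟫}

/-- Dual cone of a set. -/
def dualCone {n : ℕ} (C : Set (EuclideanSpace ℝ (Fin n))) :
    Set (EuclideanSpace ℝ (Fin n)) :=
  {q | ∀ v ∈ C, 0 ≤ ⟪q, v⟫}

/-- Recession (asymptotic) cone of a closed convex set. -/
def recessionCone {n : ℕ} (K : Set (EuclideanSpace ℝ (Fin n))) :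
    Set (EuclideanSpace ℝ (Fin n)) :=
  {v | ∀ x ∈ K, ∀ t : ℝ, 0 ≤ t → x + t • v ∈ K}

/-- Evaluation of a vector of polynomials as a map ℝⁿ → ℝⁿ. -/
noncomputable def evalMap {n : ℕ} (Q : Fin n → MvPolynomial (Fin n) ℝ)
    (x : EuclideanSpace ℝ (Fin n)) : EuclideanSpace ℝ (Fin n) :=
  WithLp.toLp 2 (fun i => MvPolynomial.eval (fun j => x j) (Q i))

/-- Leading term: the degree-`d` homogeneous component of each coordinate. -/
noncomputable def leadTerm {n : ℕ} (d : ℕ) (P : Fin n → MvPolynomial (Fin n) ℝ) :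
    Fin n → MvPolynomial (Fin n) ℝ :=
  fun i => MvPolynomial.homogeneousComponent d (P i)

/-- Frobenius norm of the coefficients of a polynomial map. -/
noncomputable def pnorm {n : ℕ} (Q : Fin n → MvPolynomial (Fin n) ℝ) : ℝ :=
  Real.sqrt (∑ i, ∑ m ∈ (Q i).support, ((Q i).coeff m) ^ 2)

section Aux

open Filter Finset

variable {n : ℕ}

noncomputable def cnorm1 {n : ℕ} (p : MvPolynomial (Fin n) ℝ) : ℝ :=
  ∑ m ∈ p.support, |p.coeff m|

lemma cnorm1_nonneg (p : MvPolynomial (Fin n) ℝ) : 0 ≤ cnorm1 p :=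
  Finset.sum_nonneg fun _ _ => abs_nonneg _

lemma coord_abs_le_norm (x : EuclideanSpace ℝ (Fin n)) (i : Fin n) : |x i| ≤ ‖x‖ := by
  rw [EuclideanSpace.norm_eq, ← Real.sqrt_sq_eq_abs]
  apply Real.sqrt_le_sqrt
  have h := Finset.single_le_sum (f := fun j => ‖x j‖^2) (fun j _ => sq_nonneg _)
    (Finset.mem_univ i)
  simpa using h

lemma eval_abs_le {p : MvPolynomial (Fin n) ℝ} {x : Fin n → ℝ} {M : ℝ} {e : ℕ}
    (hM : 1 ≤ M) (hx : ∀ j, |x j| ≤ M) (hdeg : p.totalDegree ≤ e) :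
    |eval x p| ≤ cnorm1 p * M ^ e := by
  rw [eval_eq']
  calc |∑ m ∈ p.support, p.coeff m * ∏ i, x i ^ m i|
      ≤ ∑ m ∈ p.support, |p.coeff m * ∏ i, x i ^ m i| := Finset.abs_sum_le_sum_abs _ _
    _ ≤ ∑ m ∈ p.support, |p.coeff m| * M ^ e := by
        apply Finset.sum_le_sum; intro m hm
        rw [abs_mul]
        apply mul_le_mul_of_nonneg_left _ (abs_nonneg _)
        have hsum : (∑ i, m i) ≤ e := by
          have h1 : (m.sum fun _ e => e) ≤ p.totalDegree := le_totalDegree hm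
          have h2 : (m.sum fun _ e => e) = ∑ i, m i := Finsupp.sum_fintype _ _ (fun _ => rfl)
          omega
        calc |∏ i, x i ^ m i| = ∏ i, |x i| ^ m i := by
              rw [Finset.abs_prod]; exact Finset.prod_congr rfl fun i _ => abs_pow _ _
          _ ≤ ∏ i, M ^ m i := Finset.prod_le_prod (fun i _ => pow_nonneg (abs_nonneg _) _)
              (fun i _ => pow_le_pow_left₀ (abs_nonneg _) (hx i) _)
          _ = M ^ (∑ i, m i) := by rw [Finset.prod_pow_eq_pow_sum]
          _ ≤ M ^ e := pow_le_pow_right₀ hM hsum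
    _ = cnorm1 p * M ^ e := by rw [cnorm1, ← Finset.sum_mul]

lemma pnorm_nonneg (Q : Fin n → MvPolynomial (Fin n) ℝ) : 0 ≤ pnorm Q := Real.sqrt_nonneg _

lemma abs_coeff_le_pnorm (Q : Fin n → MvPolynomial (Fin n) ℝ) (i : Fin n) (m : Fin n →₀ ℕ) :
    |(Q i).coeff m| ≤ pnorm Q := by
  by_cases hm : m ∈ (Q i).support
  · rw [← Real.sqrt_sq_eq_abs, pnorm]
    apply Real.sqrt_le_sqrt
    calc (Q i).coeff m ^ 2 ≤ ∑ m' ∈ (Q i).support, (Q i).coeff m' ^ 2 :=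
          Finset.single_le_sum (f := fun m' => (Q i).coeff m' ^ 2) (fun _ _ => sq_nonneg _) hm
      _ ≤ ∑ i', ∑ m' ∈ (Q i').support, ((Q i').coeff m') ^ 2 :=
          Finset.single_le_sum (f := fun i' => ∑ m' ∈ (Q i').support, ((Q i').coeff m') ^ 2)
            (fun _ _ => Finset.sum_nonneg fun _ _ => sq_nonneg _) (Finset.mem_univ i)
  · rw [MvPolynomial.notMem_support_iff.mp hm]
    simpa using pnorm_nonneg Q

lemma card_support_le {p : MvPolynomial (Fin n) ℝ} {d : ℕ} (h : p.totalDegree ≤ d) :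
    p.support.card ≤ (d + 1) ^ n := by
  classical
  have hbd : ∀ m ∈ p.support, ∀ j, m j ≤ d := by
    intro m hm j
    by_cases hj : m j = 0
    · omega
    · have hjs : j ∈ m.support := Finsupp.mem_support_iff.mpr hj
      have h1 : m j ≤ ∑ i ∈ m.support, m i :=
        Finset.single_le_sum (fun _ _ => Nat.zero_le _) hjs
      have h2 : (m.sum fun _ e => e) ≤ p.totalDegree := le_totalDegree hm
      have h3 : (m.sum fun _ e => e) = ∑ i ∈ m.support, m i := rfl
      omega
  have key : p.support.card ≤ (Finset.univ : Finset (Fin n → Fin (d + 1))).card := by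
    apply Finset.card_le_card_of_injOn
      (f := fun (m : Fin n →₀ ℕ) => fun j => (⟨min (m j) d, by omega⟩ : Fin (d + 1)))
      (fun _ _ => Finset.mem_univ _)
    intro m₁ h₁ m₂ h₂ heq
    ext j
    have e1 := congrFun heq j
    have b1 := hbd m₁ h₁ j
    have b2 := hbd m₂ h₂ j
    have : min (m₁ j) d = min (m₂ j) d := by
      simpa [Fin.mk.injEq] using e1
    omega
  calc p.support.card ≤ (Finset.univ : Finset (Fin n → Fin (d + 1))).card := key
    _ = (d + 1) ^ n := by simp [Fintype.card_fun]

lemma cnorm1_le {p : MvPolynomial (Fin n) ℝ} {c : ℝ} {d : ℕ}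
    (hdeg : p.totalDegree ≤ d) (hc : ∀ m, |p.coeff m| ≤ c) :
    cnorm1 p ≤ ((d + 1) ^ n : ℕ) * c := by
  have hc0 : 0 ≤ c := le_trans (abs_nonneg _) (hc 0)
  calc cnorm1 p ≤ ∑ _m ∈ p.support, c := Finset.sum_le_sum fun m _ => hc m
    _ = p.support.card * c := by rw [Finset.sum_const, nsmul_eq_mul]
    _ ≤ ((d + 1) ^ n : ℕ) * c := by
        apply mul_le_mul_of_nonneg_right _ hc0
        exact_mod_cast card_support_le hdeg

lemma abs_coeff_hc_le (e : ℕ) (p : MvPolynomial (Fin n) ℝ) (m : Fin n →₀ ℕ) :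
    |(homogeneousComponent e p).coeff m| ≤ |p.coeff m| := by
  rw [coeff_homogeneousComponent]
  split <;> simp

lemma totalDegree_hc_le (e : ℕ) (p : MvPolynomial (Fin n) ℝ) :
    (homogeneousComponent e p).totalDegree ≤ e :=
  (homogeneousComponent_isHomogeneous e p).totalDegree_le

lemma eval_hc_smul (e : ℕ) (p : MvPolynomial (Fin n) ℝ) (t : ℝ) (x : Fin n → ℝ) :
    eval (fun j => t * x j) (homogeneousComponent e p)
      = t ^ e * eval x (homogeneousComponent e p) := by
  rw [eval_eq', eval_eq', Finset.mul_sum]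
  apply Finset.sum_congr rfl
  intro m hm
  have hdegm : m.degree = e := by
    by_contra hne
    have hmem := MvPolynomial.mem_support_iff.mp hm
    rw [coeff_homogeneousComponent, if_neg hne] at hmem
    exact hmem rfl
  have hsum : (∑ i, m i) = e := by
    rw [← hdegm, Finsupp.degree]
    exact (Finset.sum_subset (Finset.subset_univ _)
      (fun i _ hi => Finsupp.notMem_support_iff.mp hi)).symm
  calc (homogeneousComponent e p).coeff m * ∏ i, (t * x i) ^ m i
      = (homogeneousComponent e p).coeff m * ((∏ i, t ^ m i) * ∏ i, x i ^ m i) := by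
        rw [← Finset.prod_mul_distrib]
        congr 1; exact Finset.prod_congr rfl fun i _ => mul_pow _ _ _
    _ = t ^ e * ((homogeneousComponent e p).coeff m * ∏ i, x i ^ m i) := by
        rw [Finset.prod_pow_eq_pow_sum, hsum]; ring

lemma eval_decomp {d : ℕ} {p : MvPolynomial (Fin n) ℝ} (h : p.totalDegree ≤ d) (x : Fin n → ℝ) :
    eval x p = ∑ e ∈ Finset.range (d + 1), eval x (homogeneousComponent e p) := by
  have hsum : ∑ e ∈ Finset.range (d + 1), homogeneousComponent e p = p := by
    rw [← Finset.sum_subset (Finset.range_subset_range.mpr (by omega : p.totalDegree + 1 ≤ d + 1))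
      (fun e he hne => ?_), sum_homogeneousComponent]
    exact homogeneousComponent_eq_zero _ p (by simp only [Finset.mem_range] at he hne; omega)
  conv_lhs => rw [← hsum]
  rw [map_sum]

lemma tendsto_coords {f : ℕ → EuclideanSpace ℝ (Fin n)} {L : EuclideanSpace ℝ (Fin n)}
    (h : Filter.Tendsto f Filter.atTop (nhds L)) (i : Fin n) :
    Filter.Tendsto (fun k => f k i) Filter.atTop (nhds (L i)) := by
  have hc : Continuous fun (y : EuclideanSpace ℝ (Fin n)) => y i :=
    (continuous_apply i).comp (EuclideanSpace.equiv (Fin n) ℝ).continuous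
  exact (hc.tendsto _).comp h

lemma tendsto_euclidean {f : ℕ → EuclideanSpace ℝ (Fin n)} {L : EuclideanSpace ℝ (Fin n)}
    (h : ∀ i, Filter.Tendsto (fun k => f k i) Filter.atTop (nhds (L i))) :
    Filter.Tendsto f Filter.atTop (nhds L) := by
  have h2 : Filter.Tendsto (fun k => (EuclideanSpace.equiv (Fin n) ℝ) (f k)) Filter.atTop
      (nhds ((EuclideanSpace.equiv (Fin n) ℝ) L)) := tendsto_pi_nhds.mpr h
  have h3 := ((EuclideanSpace.equiv (Fin n) ℝ).symm.continuous.tendsto _).comp h2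
  simpa [Function.comp_def] using h3

lemma tendsto_ev (p : MvPolynomial (Fin n) ℝ) {xs : ℕ → EuclideanSpace ℝ (Fin n)}
    {xb : EuclideanSpace ℝ (Fin n)} (h : Filter.Tendsto xs Filter.atTop (nhds xb)) :
    Filter.Tendsto (fun k => eval (fun j => xs k j) p) Filter.atTop
      (nhds (eval (fun j => xb j) p)) := by
  have h2 : Filter.Tendsto (fun k => fun j => xs k j) Filter.atTop (nhds fun j => xb j) :=
    tendsto_pi_nhds.mpr fun j => tendsto_coords h j
  exact ((p.continuous_eval).tendsto _).comp h2

/-- Bound on the evaluation of a degree-`e` homogeneous component. -/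
lemma eval_hc_bound {d e : ℕ} (he : e ≤ d) (Q : Fin n → MvPolynomial (Fin n) ℝ) (i : Fin n)
    {x : Fin n → ℝ} {M : ℝ} (hM : 1 ≤ M) (hx : ∀ j, |x j| ≤ M) :
    |eval x (homogeneousComponent e (Q i))| ≤ ((d + 1) ^ n : ℕ) * pnorm Q * M ^ e := by
  calc |eval x (homogeneousComponent e (Q i))|
      ≤ cnorm1 (homogeneousComponent e (Q i)) * M ^ e :=
        eval_abs_le hM hx (totalDegree_hc_le e _)
    _ ≤ (((d + 1) ^ n : ℕ) * pnorm Q) * M ^ e := by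
        apply mul_le_mul_of_nonneg_right _ (pow_nonneg (by linarith) _)
        exact cnorm1_le ((totalDegree_hc_le e _).trans he)
          (fun m => (abs_coeff_hc_le e _ m).trans (abs_coeff_le_pnorm Q i m))

end Aux

open Filter Finset in
set_option maxHeartbeats 2000000 in
theorem stmt9 {n : ℕ} (K : Set (EuclideanSpace ℝ (Fin n)))
    (hK : K.Nonempty) (hKc : IsClosed K) (hKconv : Convex ℝ K)
    (d : ℕ) (hd : 0 < d)
    (P : Fin n → MvPolynomial (Fin n) ℝ)
    (hPdeg : ∀ i, (P i).totalDegree ≤ d) (hPd : ∃ i, (P i).totalDegree = d)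
    (hR0 : Sol (recessionCone K) (evalMap (leadTerm d P)) = {0})
    (hne : (Sol K (evalMap P)).Nonempty) :
    ∀ V : Set (EuclideanSpace ℝ (Fin n)), IsOpen V → Sol K (evalMap P) ⊆ V →
      ∃ ε > (0 : ℝ), ∀ Q : Fin n → MvPolynomial (Fin n) ℝ,
        (∀ i, (Q i).totalDegree ≤ d) → pnorm (Q - P) < ε → Sol K (evalMap Q) ⊆ V := by
  intro V hVopen hVsub
  by_contra hcon
  push_neg at hcon
  -- Step 1: solutions of nearby problems are uniformly bounded
  obtain ⟨ε₀, hε₀, R, hRbd⟩ : ∃ ε > (0:ℝ), ∃ R : ℝ,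
      ∀ Q : Fin n → MvPolynomial (Fin n) ℝ, (∀ i, (Q i).totalDegree ≤ d) →
        pnorm (Q - P) < ε → ∀ x ∈ Sol K (evalMap Q), ‖x‖ ≤ R := by
    by_contra hub
    push_neg at hub
    have hseq : ∀ k : ℕ, ∃ Q : Fin n → MvPolynomial (Fin n) ℝ,
        ∃ x : EuclideanSpace ℝ (Fin n), (∀ i, (Q i).totalDegree ≤ d) ∧
        pnorm (Q - P) < 1/(k+1) ∧ x ∈ Sol K (evalMap Q) ∧ (k+1 : ℝ) < ‖x‖ := by
      intro k
      obtain ⟨Q, hdeg, hp, x, hx, hR⟩ := hub (1/(k+1)) (by positivity) ((k:ℝ)+1)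
      exact ⟨Q, x, hdeg, hp, hx, hR⟩
    choose Q x hdeg hp hsol hnorm using hseq
    set t : ℕ → ℝ := fun k => ‖x k‖ with ht
    have ht1 : ∀ k, 1 ≤ t k := by
      intro k
      have h1 := hnorm k
      have h0 : (0:ℝ) ≤ (k:ℝ) := Nat.cast_nonneg k
      simp only [ht]; linarith
    have htpos : ∀ k, 0 < t k := fun k => lt_of_lt_of_le one_pos (ht1 k)
    have htt : Filter.Tendsto t Filter.atTop Filter.atTop := by
      apply tendsto_atTop_mono (fun k => (hnorm k).le)
      exact tendsto_atTop_add_const_right _ 1 tendsto_natCast_atTop_atTop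
    set u : ℕ → EuclideanSpace ℝ (Fin n) := fun k => (t k)⁻¹ • x k with hudef
    have husph : ∀ k, u k ∈ Metric.sphere (0 : EuclideanSpace ℝ (Fin n)) 1 := by
      intro k
      rw [mem_sphere_zero_iff_norm]
      have : ‖(t k)⁻¹ • x k‖ = |(t k)⁻¹| * ‖x k‖ := by rw [norm_smul, Real.norm_eq_abs]
      rw [hudef, this, abs_inv, abs_of_pos (htpos k)]
      exact inv_mul_cancel₀ (ne_of_gt (htpos k))
    obtain ⟨v, hvsph, φ, hφ, hvlim⟩ :=
      (isCompact_sphere (0 : EuclideanSpace ℝ (Fin n)) 1).tendsto_subseq husph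
    have hvlim' : Filter.Tendsto (fun k => u (φ k)) Filter.atTop (nhds v) := hvlim
    have httφ : Filter.Tendsto (fun k => t (φ k)) Filter.atTop Filter.atTop :=
      htt.comp hφ.tendsto_atTop
    have hxK : ∀ k, x k ∈ K := fun k => (hsol k).1
    have hXU : ∀ k, (fun j => x (φ k) j) = fun j => t (φ k) * u (φ k) j := by
      intro k; funext j
      have : u (φ k) j = (t (φ k))⁻¹ * x (φ k) j := rfl
      rw [this, ← mul_assoc, mul_inv_cancel₀ (ne_of_gt (htpos (φ k))), one_mul]
    -- v is in the recession cone
    have hvrec : v ∈ recessionCone K := by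
      intro z hz s hs
      have hlim : Filter.Tendsto (fun k => z + (s • u (φ k) - (s / t (φ k)) • z))
          Filter.atTop (nhds (z + s • v)) := by
        have h1 : Filter.Tendsto (fun k => s • u (φ k)) Filter.atTop (nhds (s • v)) :=
          hvlim'.const_smul s
        have h2 : Filter.Tendsto (fun k => (s / t (φ k))) Filter.atTop (nhds 0) := by
          simp only [div_eq_mul_inv]
          simpa using (httφ.inv_tendsto_atTop).const_mul s
        have h3 := h2.smul_const z
        have h4 := (tendsto_const_nhds (x := z) (f := Filter.atTop (α := ℕ))).add (h1.sub h3)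
        simpa using h4
      apply hKc.mem_of_tendsto hlim
      filter_upwards [httφ.eventually_ge_atTop s] with k hk
      have h0t : 0 < t (φ k) := htpos _
      have hcoef : z + (s • u (φ k) - (s / t (φ k)) • z)
          = (1 - s / t (φ k)) • z + (s / t (φ k)) • x (φ k) := by
        have h5 : s • u (φ k) = (s / t (φ k)) • x (φ k) := by
          rw [hudef, smul_smul, div_eq_mul_inv]
        rw [h5, sub_smul, one_smul]
        abel
      rw [hcoef]
      refine hKconv hz (hxK (φ k)) ?_ ?_ (by ring)
      · have : s / t (φ k) ≤ 1 := div_le_one_of_le₀ hk (le_of_lt h0t)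
        linarith
      · positivity
    -- rescaled maps converge to the leading term at v
    set g : ℕ → EuclideanSpace ℝ (Fin n) :=
      fun k => ((t (φ k))^d)⁻¹ • evalMap (Q (φ k)) (x (φ k)) with hgdef
    have hprk : ∀ k : ℕ, pnorm (Q (φ k) - P) < 1/(k+1) := by
      intro k
      refine lt_of_lt_of_le (hp (φ k)) ?_
      apply one_div_le_one_div_of_le (by positivity)
      have := (hφ.le_apply : k ≤ φ k)
      push_cast
      linarith [(Nat.cast_le (α := ℝ)).mpr this]
    have hpr1 : ∀ k : ℕ, pnorm (Q (φ k) - P) ≤ 1 := by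
      intro k
      refine le_trans (hprk k).le ?_
      rw [div_le_one (by positivity)]
      linarith [Nat.cast_nonneg (α := ℝ) k]
    have hpr0 : Filter.Tendsto (fun k => pnorm (Q (φ k) - P)) Filter.atTop (nhds 0) := by
      apply squeeze_zero (fun k => pnorm_nonneg _) (fun k => (hprk k).le)
      exact tendsto_one_div_add_atTop_nhds_zero_nat
    have hg : Filter.Tendsto g Filter.atTop (nhds (evalMap (leadTerm d P) v)) := by
      apply tendsto_euclidean
      intro i
      set N : ℝ := (((d + 1) ^ n : ℕ) : ℝ) with hN
      have hN0 : 0 ≤ N := by positivity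
      set C : ℝ := ∑ e ∈ Finset.range d, cnorm1 (homogeneousComponent e (P i)) with hC
      have hC0 : 0 ≤ C := Finset.sum_nonneg fun _ _ => cnorm1_nonneg _
      have hD : ∀ k, |g k i - eval (fun j => u (φ k) j) (homogeneousComponent d (P i))|
          ≤ (C + d * N) / t (φ k) + N * pnorm (Q (φ k) - P) := by
        intro k
        set T : ℝ := t (φ k) with hT
        have hT1 : 1 ≤ T := ht1 _
        have hTpos : 0 < T := htpos _
        have hTd : (0:ℝ) < T ^ d := pow_pos hTpos d
        set X : Fin n → ℝ := fun j => x (φ k) j with hX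
        set U : Fin n → ℝ := fun j => u (φ k) j with hU
        have hXj : ∀ j, |X j| ≤ T := fun j => coord_abs_le_norm (x (φ k)) j
        set pr : ℝ := pnorm (Q (φ k) - P) with hpr
        have hprnn : 0 ≤ pr := pnorm_nonneg _
        -- the key identity
        have hqsplit : homogeneousComponent d (Q (φ k) i)
            = homogeneousComponent d (P i) + homogeneousComponent d ((Q (φ k) - P) i) := by
          have : Q (φ k) i = P i + (Q (φ k) - P) i := by simp
          rw [this, map_add]
        have hgk : g k i = (T ^ d)⁻¹ * eval X (Q (φ k) i) := rfl
        have hhom : eval X (homogeneousComponent d (P i))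
            = T ^ d * eval U (homogeneousComponent d (P i)) := by
          have := eval_hc_smul d (P i) T U
          rw [hX, hXU k, ← hU] at *
          exact this
        have hid : g k i - eval U (homogeneousComponent d (P i))
            = (T ^ d)⁻¹ * ((∑ e ∈ Finset.range d, eval X (homogeneousComponent e (Q (φ k) i)))
              + eval X (homogeneousComponent d ((Q (φ k) - P) i))) := by
          rw [hgk, eval_decomp (hdeg (φ k) i) X, Finset.sum_range_succ, hqsplit, map_add, hhom]
          field_simp
          ring
        rw [hid]
        have hTdd : T ^ d = T ^ (d - 1) * T := by
          rw [← pow_succ]; congr 1; omega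
        have hS1 : |∑ e ∈ Finset.range d, eval X (homogeneousComponent e (Q (φ k) i))|
            ≤ (C + d * (N * pr)) * T ^ (d - 1) := by
          calc |∑ e ∈ Finset.range d, eval X (homogeneousComponent e (Q (φ k) i))|
              ≤ ∑ e ∈ Finset.range d, |eval X (homogeneousComponent e (Q (φ k) i))| :=
                Finset.abs_sum_le_sum_abs _ _
            _ ≤ ∑ e ∈ Finset.range d,
                  (cnorm1 (homogeneousComponent e (P i)) + N * pr) * T ^ (d - 1) := by
                apply Finset.sum_le_sum
                intro e he
                have he' : e ≤ d - 1 := by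
                  have := Finset.mem_range.mp he; omega
                have hsplit : homogeneousComponent e (Q (φ k) i)
                    = homogeneousComponent e (P i) + homogeneousComponent e ((Q (φ k) - P) i) := by
                  have : Q (φ k) i = P i + (Q (φ k) - P) i := by simp
                  rw [this, map_add]
                have htri : |eval X (homogeneousComponent e (Q (φ k) i))|
                    ≤ |eval X (homogeneousComponent e (P i))|
                      + |eval X (homogeneousComponent e ((Q (φ k) - P) i))| := by
                  rw [hsplit, map_add]; exact abs_add_le _ _
                have hb1 : |eval X (homogeneousComponent e (P i))|
                    ≤ cnorm1 (homogeneousComponent e (P i)) * T ^ (d-1) := by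
                  refine le_trans (eval_abs_le hT1 hXj (totalDegree_hc_le e _)) ?_
                  apply mul_le_mul_of_nonneg_left (pow_le_pow_right₀ hT1 he') (cnorm1_nonneg _)
                have hb2 : |eval X (homogeneousComponent e ((Q (φ k) - P) i))|
                    ≤ N * pr * T ^ (d-1) := by
                  refine le_trans (eval_hc_bound (by omega : e ≤ d) (Q (φ k) - P) i hT1 hXj) ?_
                  apply mul_le_mul_of_nonneg_left (pow_le_pow_right₀ hT1 he') (by positivity)
                calc |eval X (homogeneousComponent e (Q (φ k) i))|
                    ≤ |eval X (homogeneousComponent e (P i))|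
                      + |eval X (homogeneousComponent e ((Q (φ k) - P) i))| := htri
                  _ ≤ cnorm1 (homogeneousComponent e (P i)) * T ^ (d-1) + N * pr * T ^ (d-1) := by
                      linarith
                  _ = (cnorm1 (homogeneousComponent e (P i)) + N * pr) * T ^ (d-1) := by ring
            _ = (C + d * (N * pr)) * T ^ (d - 1) := by
                rw [← Finset.sum_mul]
                congr 1
                rw [Finset.sum_add_distrib, Finset.sum_const, Finset.card_range, nsmul_eq_mul]
        have hS2 : |eval X (homogeneousComponent d ((Q (φ k) - P) i))| ≤ N * pr * T ^ d :=
          eval_hc_bound le_rfl (Q (φ k) - P) i hT1 hXj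
        calc |(T ^ d)⁻¹ * ((∑ e ∈ Finset.range d, eval X (homogeneousComponent e (Q (φ k) i)))
              + eval X (homogeneousComponent d ((Q (φ k) - P) i)))|
            ≤ (T ^ d)⁻¹ * ((C + d * (N * pr)) * T ^ (d - 1) + N * pr * T ^ d) := by
              rw [abs_mul, abs_of_pos (inv_pos.mpr hTd)]
              apply mul_le_mul_of_nonneg_left _ (le_of_lt (inv_pos.mpr hTd))
              refine le_trans (abs_add_le _ _) ?_
              exact add_le_add hS1 hS2
          _ = (C + d * (N * pr)) / T + N * pr := by
              rw [hTdd]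
              field_simp
          _ ≤ (C + d * N) / T + N * pr := by
              have hNpr : N * pr ≤ N * 1 := mul_le_mul_of_nonneg_left (hpr1 k) hN0
              have h9 : C + d * (N * pr) ≤ C + d * N := by nlinarith
              have h10 : (C + d * (N * pr)) / T ≤ (C + d * N) / T := by
                gcongr
              linarith
          _ ≤ (C + d * N) / t (φ k) + N * pnorm (Q (φ k) - P) := le_refl _
      -- squeeze
      have hb0 : Filter.Tendsto (fun k => (C + d * N) / t (φ k) + N * pnorm (Q (φ k) - P))
          Filter.atTop (nhds 0) := by
        have h1 : Filter.Tendsto (fun k => (C + d * N) / t (φ k)) Filter.atTop (nhds 0) :=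
          Filter.Tendsto.div_atTop tendsto_const_nhds httφ
        have h2 := hpr0.const_mul N
        simpa using h1.add h2
      have hDlim : Filter.Tendsto
          (fun k => g k i - eval (fun j => u (φ k) j) (homogeneousComponent d (P i)))
          Filter.atTop (nhds 0) := squeeze_zero_norm hD hb0
      have hUlim : Filter.Tendsto
          (fun k => eval (fun j => u (φ k) j) (homogeneousComponent d (P i)))
          Filter.atTop (nhds (eval (fun j => v j) (homogeneousComponent d (P i)))) :=
        tendsto_ev _ hvlim'
      have := hDlim.add hUlim
      simp only [sub_add_cancel, zero_add] at this
      exact this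
    -- pass to the limit in the VI
    have hvsol : v ∈ Sol (recessionCone K) (evalMap (leadTerm d P)) := by
      refine ⟨hvrec, ?_⟩
      intro w hw
      obtain ⟨z₀, hz₀⟩ := hK
      have hineq : ∀ k : ℕ, 0 ≤ ⟪g k, (t (φ k))⁻¹ • z₀ + w - u (φ k)⟫ := by
        intro k
        have hT := htpos (φ k)
        have hyK : z₀ + (t (φ k)) • w ∈ K := hw z₀ hz₀ (t (φ k)) (le_of_lt hT)
        have h0 := (hsol (φ k)).2 _ hyK
        have e2 : (t (φ k))⁻¹ • (z₀ + (t (φ k)) • w - x (φ k))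
            = (t (φ k))⁻¹ • z₀ + w - u (φ k) := by
          rw [smul_sub, smul_add, smul_smul, inv_mul_cancel₀ (ne_of_gt hT), one_smul, hudef]
        rw [← e2, hgdef]
        rw [real_inner_smul_right, real_inner_smul_left]
        have h1 : (0:ℝ) ≤ ((t (φ k))^d)⁻¹ := by positivity
        have h2 : (0:ℝ) ≤ (t (φ k))⁻¹ := by positivity
        positivity
      have harg : Filter.Tendsto (fun k => (t (φ k))⁻¹ • z₀ + w - u (φ k))
          Filter.atTop (nhds (w - v)) := by
        have h1 : Filter.Tendsto (fun k => (t (φ k))⁻¹) Filter.atTop (nhds 0) :=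
          httφ.inv_tendsto_atTop
        have h2 := ((h1.smul_const z₀).add
          (tendsto_const_nhds (x := w) (f := Filter.atTop (α := ℕ)))).sub hvlim'
        simpa using h2
      exact ge_of_tendsto' (hg.inner harg) hineq
    have hv0 : v = (0 : EuclideanSpace ℝ (Fin n)) := by
      have : v ∈ ({0} : Set (EuclideanSpace ℝ (Fin n))) := hR0 ▸ hvsol
      simpa using this
    have hv1 : ‖v‖ = 1 := mem_sphere_zero_iff_norm.mp hvsph
    rw [hv0, norm_zero] at hv1
    norm_num at hv1
  -- Step 2: now use compactness of the closed ball
  have hseq2 : ∀ k : ℕ, ∃ Q : Fin n → MvPolynomial (Fin n) ℝ,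
      ∃ x : EuclideanSpace ℝ (Fin n), (∀ i, (Q i).totalDegree ≤ d) ∧
      pnorm (Q - P) < min ε₀ (1/(k+1)) ∧ x ∈ Sol K (evalMap Q) ∧ x ∉ V := by
    intro k
    obtain ⟨Q, hdeg, hp, hns⟩ := hcon (min ε₀ (1/(k+1))) (by positivity)
    obtain ⟨x, hx, hxV⟩ := Set.not_subset.mp hns
    exact ⟨Q, x, hdeg, hp, hx, hxV⟩
  choose Q x hdeg hp hsol hxV using hseq2
  have hxR : ∀ k, ‖x k‖ ≤ R := fun k =>
    hRbd (Q k) (hdeg k) (lt_of_lt_of_le (hp k) (min_le_left _ _)) _ (hsol k)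
  have hxball : ∀ k, x k ∈ Metric.closedBall (0 : EuclideanSpace ℝ (Fin n)) R := by
    intro k; rw [Metric.mem_closedBall, dist_zero_right]; exact hxR k
  obtain ⟨xb, hxbb, φ, hφ, hxlim⟩ :=
    (isCompact_closedBall (0 : EuclideanSpace ℝ (Fin n)) R).tendsto_subseq hxball
  have hxlim' : Filter.Tendsto (fun k => x (φ k)) Filter.atTop (nhds xb) := hxlim
  have hxbK : xb ∈ K :=
    hKc.mem_of_tendsto hxlim' (Filter.Eventually.of_forall (fun k => (hsol (φ k)).1))
  have hpk0 : Filter.Tendsto (fun k => pnorm (Q (φ k) - P)) Filter.atTop (nhds 0) := by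
    have hble : ∀ k : ℕ, pnorm (Q (φ k) - P) ≤ 1/((k:ℝ)+1) := by
      intro k
      refine le_trans (le_of_lt (lt_of_lt_of_le (hp (φ k)) (min_le_right _ _))) ?_
      apply one_div_le_one_div_of_le (by positivity)
      have := (hφ.le_apply : k ≤ φ k)
      push_cast
      linarith [(Nat.cast_le (α := ℝ)).mpr this]
    exact squeeze_zero (fun k => pnorm_nonneg _) hble tendsto_one_div_add_atTop_nhds_zero_nat
  set M : ℝ := max R 1 with hM
  have hM1 : 1 ≤ M := le_max_right _ _
  have hFlim : Filter.Tendsto (fun k => evalMap (Q (φ k)) (x (φ k))) Filter.atTop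
      (nhds (evalMap P xb)) := by
    apply tendsto_euclidean
    intro i
    have hsplit : ∀ k : ℕ, evalMap (Q (φ k)) (x (φ k)) i
        = eval (fun j => x (φ k) j) (P i) + eval (fun j => x (φ k) j) ((Q (φ k) - P) i) := by
      intro k
      have : Q (φ k) i = P i + (Q (φ k) - P) i := by simp
      simp only [evalMap]
      rw [this, map_add]
    have h1 : Filter.Tendsto (fun k => eval (fun j => x (φ k) j) (P i)) Filter.atTop
        (nhds (eval (fun j => xb j) (P i))) := tendsto_ev _ hxlim'
    have h2 : Filter.Tendsto (fun k => eval (fun j => x (φ k) j) ((Q (φ k) - P) i))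
        Filter.atTop (nhds 0) := by
      have hb : Filter.Tendsto
          (fun k : ℕ => (((d + 1) ^ n : ℕ) : ℝ) * pnorm (Q (φ k) - P) * M ^ d)
          Filter.atTop (nhds 0) := by
        have := (hpk0.const_mul (((d + 1) ^ n : ℕ) : ℝ)).mul_const (M ^ d)
        simpa using this
      apply squeeze_zero_norm ?_ hb
      intro k
      have hxj : ∀ j, |x (φ k) j| ≤ M :=
        fun j => le_trans (coord_abs_le_norm _ j) (le_trans (hxR (φ k)) (le_max_left _ _))
      have hdegr : ((Q (φ k) - P) i).totalDegree ≤ d := by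
        have := totalDegree_sub (Q (φ k) i) (P i)
        have h3 : (Q (φ k) - P) i = Q (φ k) i - P i := rfl
        rw [h3]
        exact le_trans this (max_le (hdeg (φ k) i) (hPdeg i))
      calc ‖eval (fun j => x (φ k) j) ((Q (φ k) - P) i)‖
          ≤ cnorm1 ((Q (φ k) - P) i) * M ^ d := eval_abs_le hM1 hxj hdegr
        _ ≤ (((d + 1) ^ n : ℕ) : ℝ) * pnorm (Q (φ k) - P) * M ^ d := by
            apply mul_le_mul_of_nonneg_right _ (pow_nonneg (by linarith) _)
            exact cnorm1_le hdegr (fun m => abs_coeff_le_pnorm (Q (φ k) - P) i m)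
    have := h1.add h2
    rw [add_zero] at this
    exact this.congr (fun k => (hsplit k).symm)
  have hxbSol : xb ∈ Sol K (evalMap P) := by
    refine ⟨hxbK, ?_⟩
    intro y hy
    have hk : ∀ k : ℕ, 0 ≤ ⟪evalMap (Q (φ k)) (x (φ k)), y - x (φ k)⟫ :=
      fun k => (hsol (φ k)).2 y hy
    have harg : Filter.Tendsto (fun k => y - x (φ k)) Filter.atTop (nhds (y - xb)) :=
      tendsto_const_nhds.sub hxlim'
    exact ge_of_tendsto' (hFlim.inner harg) hk
  have hxbV : xb ∈ V := hVsub hxbSol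
  have hev := hxlim'.eventually (hVopen.mem_nhds hxbV)
  obtain ⟨k, hk⟩ := hev.exists
  exact (hxV (φ k)) hk
end

section
/- Let K ⊆ ℝⁿ be a nonempty closed convex set with 0 ∈ K, and let P be a polynomial map of degree d that is strictly monotone on K (⟨P(y)−P(x), y−x⟩ > 0 for all x ≠ y in K). If Sol(K^∞, P^∞) = {0}, then for every p ∈ ℝⁿ the variational inequality VI(K, P+p) has exactly one solution, and the resulting single-valued map p ↦ (unique solution of VI(K,P+p)) is continuous on ℝⁿ. -/
open scoped RealInnerProductSpace
open MvPolynomial Bornology Filter Topology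
open scoped NNReal

lemma contDiff_eval_aux {n : ℕ} (q : MvPolynomial (Fin n) ℝ) :
    ContDiff ℝ (⊤ : ℕ∞) (fun y : EuclideanSpace ℝ (Fin n) => MvPolynomial.eval (fun j => y j) q) := by
  induction q using MvPolynomial.induction_on with
  | C a => simpa using contDiff_const
  | add p q hp hq => simpa [map_add] using hp.add hq
  | mul_X p i hp =>
      simpa [map_mul] using hp.mul (EuclideanSpace.proj (𝕜 := ℝ) i).contDiff

lemma contDiff_evalMap {n : ℕ} (Q : Fin n → MvPolynomial (Fin n) ℝ) :
    ContDiff ℝ (⊤ : ℕ∞) (evalMap Q) := by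
  have h : ContDiff ℝ (⊤ : ℕ∞) (fun x : EuclideanSpace ℝ (Fin n) => (fun i => MvPolynomial.eval (fun j => x j) (Q i) : Fin n → ℝ)) :=
    contDiff_pi.2 fun i => contDiff_eval_aux (Q i)
  exact ((PiLp.continuousLinearEquiv 2 ℝ (fun _ : Fin n => ℝ)).symm.contDiff).comp h

lemma continuous_evalMap {n : ℕ} (Q : Fin n → MvPolynomial (Fin n) ℝ) :
    Continuous (evalMap Q) := (contDiff_evalMap Q).continuous

lemma eval_homog_smul {n : ℕ} {q : MvPolynomial (Fin n) ℝ} {m : ℕ}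
    (hq : q.IsHomogeneous m) (t : ℝ) (x : Fin n → ℝ) :
    MvPolynomial.eval (fun j => t * x j) q = t ^ m * MvPolynomial.eval x q := by
  rw [MvPolynomial.eval_eq, MvPolynomial.eval_eq, Finset.mul_sum]
  refine Finset.sum_congr rfl fun v hv => ?_
  have hdeg : ∑ i ∈ v.support, v i = m := by
    have := hq (MvPolynomial.mem_support_iff.1 hv)
    simpa [Finsupp.weight, Finsupp.degree, Finsupp.linearCombination, Finsupp.sum] using this
  calc q.coeff v * ∏ i ∈ v.support, (t * x i) ^ v i
      = q.coeff v * ((∏ i ∈ v.support, t ^ v i) * ∏ i ∈ v.support, x i ^ v i) := by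
        rw [← Finset.prod_mul_distrib]; simp [mul_pow]
    _ = t ^ m * (q.coeff v * ∏ i ∈ v.support, x i ^ v i) := by
        rw [Finset.prod_pow_eq_pow_sum]
        rw [hdeg]; ring

lemma evalMap_hc_smul {n : ℕ} (j : ℕ) (Q : Fin n → MvPolynomial (Fin n) ℝ) (t : ℝ)
    (x : EuclideanSpace ℝ (Fin n)) :
    evalMap (fun i => homogeneousComponent j (Q i)) (t • x)
      = t ^ j • evalMap (fun i => homogeneousComponent j (Q i)) x := by
  ext i
  have h := eval_homog_smul (homogeneousComponent_isHomogeneous j (Q i)) t (fun k => x k)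
  simpa [evalMap] using h

lemma evalMap_eq_sum {n : ℕ} (d : ℕ) (P : Fin n → MvPolynomial (Fin n) ℝ)
    (hPdeg : ∀ i, (P i).totalDegree ≤ d) (x : EuclideanSpace ℝ (Fin n)) :
    evalMap P x = ∑ j ∈ Finset.range (d+1),
      evalMap (fun i => homogeneousComponent j (P i)) x := by
  ext i
  have hsum : ∑ j ∈ Finset.range (d+1), homogeneousComponent j (P i) = P i := by
    rw [← Finset.sum_subset (Finset.range_subset_range.2 (Nat.succ_le_succ (hPdeg i)))]
    · exact sum_homogeneousComponent (P i)
    · intro j hj hj'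
      exact homogeneousComponent_eq_zero j (P i)
        (lt_of_lt_of_le (by simpa using hj') (by simpa using Nat.lt_succ_iff.1 (Finset.mem_range.1 hj)))
  have h1 : evalMap P x i = ∑ j ∈ Finset.range (d+1),
      MvPolynomial.eval (fun k => x k) (homogeneousComponent j (P i)) := by
    show MvPolynomial.eval (fun j => x j) (P i) = _
    conv_lhs => rw [← hsum]
    rw [map_sum]
  rw [h1]
  exact (map_sum (EuclideanSpace.proj (𝕜 := ℝ) i)
    (fun j => evalMap (fun i => homogeneousComponent j (P i)) x) (Finset.range (d+1))).symm

lemma tendsto_evalMap_leading {n : ℕ} (d : ℕ) (P : Fin n → MvPolynomial (Fin n) ℝ)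
    (hPdeg : ∀ i, (P i).totalDegree ≤ d)
    {t : ℕ → ℝ} (ht : Tendsto t atTop atTop)
    {u : ℕ → EuclideanSpace ℝ (Fin n)} {v : EuclideanSpace ℝ (Fin n)}
    (hu : Tendsto u atTop (𝓝 v)) :
    Tendsto (fun k => (t k ^ d)⁻¹ • evalMap P (t k • u k)) atTop
      (𝓝 (evalMap (leadTerm d P) v)) := by
  have hQcont : ∀ j, Continuous (evalMap (fun i => homogeneousComponent j (P i))) :=
    fun j => continuous_evalMap _
  have key : ∀ᶠ k in atTop, (t k ^ d)⁻¹ • evalMap P (t k • u k)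
      = ∑ j ∈ Finset.range (d+1),
          (t k ^ j / t k ^ d) • evalMap (fun i => homogeneousComponent j (P i)) (u k) := by
    filter_upwards [ht.eventually_ge_atTop 1] with k hk
    have htk : (0:ℝ) < t k := lt_of_lt_of_le one_pos hk
    rw [evalMap_eq_sum d P hPdeg, Finset.smul_sum]
    refine Finset.sum_congr rfl fun j hj => ?_
    rw [evalMap_hc_smul, smul_smul]
    congr 1
    field_simp
  have hg : Tendsto (fun k => ∑ j ∈ Finset.range (d+1),
      (t k ^ j / t k ^ d) • evalMap (fun i => homogeneousComponent j (P i)) (u k)) atTop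
      (𝓝 (evalMap (leadTerm d P) v)) := by
    have hlim : ∀ j ∈ Finset.range (d+1),
        Tendsto (fun k => (t k ^ j / t k ^ d) • evalMap (fun i => homogeneousComponent j (P i)) (u k))
          atTop (𝓝 (if j = d then evalMap (leadTerm d P) v else 0)) := by
      intro j hj
      have hG : Tendsto (fun k => evalMap (fun i => homogeneousComponent j (P i)) (u k)) atTop
          (𝓝 (evalMap (fun i => homogeneousComponent j (P i)) v)) :=
        ((hQcont j).tendsto v).comp hu
      rcases eq_or_lt_of_le (Nat.lt_succ_iff.1 (Finset.mem_range.1 hj)) with hjd | hjd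
      · have hscal : Tendsto (fun k => t k ^ j / t k ^ d) atTop (𝓝 1) := by
          refine Tendsto.congr' ?_ tendsto_const_nhds
          filter_upwards [ht.eventually_ge_atTop 1] with k hk
          have : t k ≠ 0 := ne_of_gt (lt_of_lt_of_le one_pos hk)
          rw [hjd, div_self (pow_ne_zero _ this)]
        rw [show leadTerm d P = fun i => homogeneousComponent d (P i) from rfl]
        simpa [hjd] using hscal.smul hG
      · have hscal : Tendsto (fun k => t k ^ j / t k ^ d) atTop (𝓝 0) := by
          have hpow : Tendsto (fun k => t k ^ (d - j)) atTop atTop :=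
            (tendsto_pow_atTop (Nat.sub_ne_zero_of_lt hjd)).comp ht
          refine Tendsto.congr' ?_ hpow.inv_tendsto_atTop
          filter_upwards [ht.eventually_ge_atTop 1] with k hk
          have h0 : t k ≠ 0 := ne_of_gt (lt_of_lt_of_le one_pos hk)
          have hsplit : t k ^ d = t k ^ (d - j) * t k ^ j := by
            rw [← pow_add]; congr 1; omega
          rw [Pi.inv_apply, eq_div_iff (pow_ne_zero _ h0), hsplit,
            inv_mul_cancel_left₀ (pow_ne_zero _ h0)]
        have hne : ¬ (j = d) := Nat.ne_of_lt hjd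
        simpa [hne] using hscal.smul hG
    have := tendsto_finset_sum (Finset.range (d+1)) hlim
    simpa [Finset.sum_ite_eq' (Finset.range (d+1)) d] using this
  exact hg.congr' (Filter.EventuallyEq.symm key)


lemma exists_proj {C : Set (EuclideanSpace ℝ (Fin n))} (hconv : Convex ℝ C)
    (hne : C.Nonempty) (hc : IsClosed C) (u : EuclideanSpace ℝ (Fin n)) :
    ∃ v ∈ C, ∀ w ∈ C, ⟪u - v, w - v⟫ ≤ 0 := by
  obtain ⟨v, hv, heq⟩ := exists_norm_eq_iInf_of_complete_convex hne hc.isComplete hconv u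
  exact ⟨v, hv, (norm_eq_iInf_iff_real_inner_le_zero hconv hv).1 heq⟩

lemma exists_sol_strong {C : Set (EuclideanSpace ℝ (Fin n))} (hconv : Convex ℝ C)
    (hne : C.Nonempty) (hc : IsClosed C)
    (G : EuclideanSpace ℝ (Fin n) → EuclideanSpace ℝ (Fin n))
    {ε : ℝ} (hε : 0 < ε)
    (hsm : ∀ x ∈ C, ∀ y ∈ C, ε * ‖y - x‖^2 ≤ ⟪G y - G x, y - x⟫)
    {L : ℝ≥0} (hlip : LipschitzOnWith L G C) :
    ∃ x ∈ C, ∀ y ∈ C, 0 ≤ ⟪G x, y - x⟫ := by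
  classical
  set γ : ℝ := ε / ((L:ℝ)^2 + 1) with hγdef
  have hL0 : (0:ℝ) ≤ (L:ℝ) := L.coe_nonneg
  have hden : (0:ℝ) < (L:ℝ)^2 + 1 := by positivity
  have hγ : 0 < γ := div_pos hε hden
  have hγε : γ * ((L:ℝ)^2 + 1) = ε := div_mul_cancel₀ ε (ne_of_gt hden)
  set β : ℝ := 1 - 2*γ*ε + γ^2*(L:ℝ)^2 with hβdef
  have hβ1 : β < 1 := by nlinarith
  -- the projection map
  have hproj : ∀ u : EuclideanSpace ℝ (Fin n), ∃ v, v ∈ C ∧ ∀ w ∈ C, ⟪u - v, w - v⟫ ≤ 0 := by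
    intro u
    obtain ⟨v, hv, h⟩ := exists_proj hconv hne hc u
    exact ⟨v, hv, h⟩
  set π : EuclideanSpace ℝ (Fin n) → EuclideanSpace ℝ (Fin n) :=
    fun u => Classical.choose (hproj u) with hπdef
  have hπmem : ∀ u, π u ∈ C := fun u => (Classical.choose_spec (hproj u)).1
  have hπvar : ∀ u, ∀ w ∈ C, ⟪u - π u, w - π u⟫ ≤ 0 :=
    fun u => (Classical.choose_spec (hproj u)).2
  have hπnonexp : ∀ u₁ u₂, ‖π u₁ - π u₂‖ ≤ ‖u₁ - u₂‖ := by
    intro u₁ u₂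
    have h₁ := hπvar u₁ (π u₂) (hπmem u₂)
    have h₂ := hπvar u₂ (π u₁) (hπmem u₁)
    have key : ‖π u₁ - π u₂‖^2 ≤ ⟪u₁ - u₂, π u₁ - π u₂⟫ := by
      have e₁ : 0 ≤ ⟪u₁ - π u₁, π u₁ - π u₂⟫ := by
        rw [show π u₂ - π u₁ = -(π u₁ - π u₂) by abel] at h₁
        rw [inner_neg_right] at h₁; linarith
      have expand : ⟪u₁ - u₂, π u₁ - π u₂⟫
          = ⟪u₁ - π u₁, π u₁ - π u₂⟫ - ⟪u₂ - π u₂, π u₁ - π u₂⟫ + ‖π u₁ - π u₂‖^2 := by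
        rw [← real_inner_self_eq_norm_sq, ← inner_sub_left, ← inner_add_left]
        congr 1
        abel
      linarith
    rcases eq_or_lt_of_le (norm_nonneg (π u₁ - π u₂)) with h0 | h0
    · rw [← h0]; exact norm_nonneg _
    · have hcs : ⟪u₁ - u₂, π u₁ - π u₂⟫ ≤ ‖u₁ - u₂‖ * ‖π u₁ - π u₂‖ := real_inner_le_norm _ _
      nlinarith [key, hcs]
  have hGlip : ∀ x ∈ C, ∀ y ∈ C, ‖G x - G y‖ ≤ (L:ℝ) * ‖x - y‖ := by
    intro x hx y hy
    have h := (lipschitzOnWith_iff_dist_le_mul.1 hlip) x hx y hy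
    rwa [dist_eq_norm, dist_eq_norm] at h
  -- contraction estimate
  have hcontr : ∀ x ∈ C, ∀ y ∈ C,
      ‖(x - γ • G x) - (y - γ • G y)‖^2 ≤ β * ‖x - y‖^2 := by
    intro x hx y hy
    have hexp : (x - γ • G x) - (y - γ • G y) = (x - y) - γ • (G x - G y) := by
      rw [smul_sub]; abel
    rw [hexp, norm_sub_sq_real]
    have h1 : ⟪x - y, γ • (G x - G y)⟫ = γ * ⟪G x - G y, x - y⟫ := by
      rw [real_inner_smul_right, real_inner_comm]
    have h2 : ‖γ • (G x - G y)‖^2 = γ^2 * ‖G x - G y‖^2 := by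
      rw [norm_smul, mul_pow, Real.norm_eq_abs, sq_abs]
    have hmono : ε * ‖x - y‖^2 ≤ ⟪G x - G y, x - y⟫ := hsm y hy x hx
    have hlipb : ‖G x - G y‖ ≤ (L:ℝ) * ‖x - y‖ := hGlip x hx y hy
    have hlipb2 : ‖G x - G y‖^2 ≤ (L:ℝ)^2 * ‖x - y‖^2 := by
      nlinarith [norm_nonneg (G x - G y), norm_nonneg (x - y)]
    rw [h1, h2]
    nlinarith
  set c : ℝ := Real.sqrt (max β 0) with hcdef
  have hc0 : 0 ≤ c := Real.sqrt_nonneg _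
  have hc1 : c < 1 := by
    have : max β 0 < 1 := max_lt hβ1 one_pos
    calc c < Real.sqrt 1 := Real.sqrt_lt_sqrt (le_max_right _ _) this
      _ = 1 := Real.sqrt_one
  haveI : Nonempty C := hne.to_subtype
  haveI : CompleteSpace C := hc.isComplete.completeSpace_coe
  set T : C → C := fun x => ⟨π ((x : EuclideanSpace ℝ (Fin n)) - γ • G x), hπmem _⟩ with hTdef
  have hTlip : ∀ x y : C, dist (T x) (T y) ≤ c * dist x y := by
    intro x y
    rw [Subtype.dist_eq, Subtype.dist_eq, dist_eq_norm, dist_eq_norm]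
    have h1 : ‖π ((x:EuclideanSpace ℝ (Fin n)) - γ • G x) - π ((y:EuclideanSpace ℝ (Fin n)) - γ • G y)‖
        ≤ ‖((x:EuclideanSpace ℝ (Fin n)) - γ • G x) - ((y:EuclideanSpace ℝ (Fin n)) - γ • G y)‖ :=
      hπnonexp _ _
    have h2 := hcontr x x.2 y y.2
    have h3 : ‖((x:EuclideanSpace ℝ (Fin n)) - γ • G x) - ((y:EuclideanSpace ℝ (Fin n)) - γ • G y)‖
        ≤ c * ‖(x:EuclideanSpace ℝ (Fin n)) - y‖ := by
      have h4 : ‖((x:EuclideanSpace ℝ (Fin n)) - γ • G x) - ((y:EuclideanSpace ℝ (Fin n)) - γ • G y)‖^2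
          ≤ max β 0 * ‖(x:EuclideanSpace ℝ (Fin n)) - y‖^2 := by
        refine le_trans h2 ?_
        apply mul_le_mul_of_nonneg_right (le_max_left _ _) (sq_nonneg _)
      calc ‖((x:EuclideanSpace ℝ (Fin n)) - γ • G x) - ((y:EuclideanSpace ℝ (Fin n)) - γ • G y)‖
          = Real.sqrt (‖((x:EuclideanSpace ℝ (Fin n)) - γ • G x) - ((y:EuclideanSpace ℝ (Fin n)) - γ • G y)‖^2) := by
            rw [Real.sqrt_sq (norm_nonneg _)]
        _ ≤ Real.sqrt (max β 0 * ‖(x:EuclideanSpace ℝ (Fin n)) - y‖^2) := Real.sqrt_le_sqrt h4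
        _ = c * ‖(x:EuclideanSpace ℝ (Fin n)) - y‖ := by
            rw [Real.sqrt_mul (le_max_right β 0), Real.sqrt_sq (norm_nonneg _)]
    exact le_trans h1 h3
  have hcontracting : ContractingWith c.toNNReal T := by
    constructor
    · have h1 : c.toNNReal < (1:ℝ).toNNReal := (Real.toNNReal_lt_toNNReal_iff one_pos).2 hc1
      simpa using h1
    · refine LipschitzWith.of_dist_le_mul fun x y => ?_
      rw [Real.coe_toNNReal c hc0]
      exact hTlip x y
  set xb : C := ContractingWith.fixedPoint T hcontracting with hxbdef
  have hfix : T xb = xb := ContractingWith.fixedPoint_isFixedPt hcontracting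
  set x : EuclideanSpace ℝ (Fin n) := (xb : EuclideanSpace ℝ (Fin n)) with hxdef
  have hπfix : π (x - γ • G x) = x := by
    have := congrArg (fun z : C => (z : EuclideanSpace ℝ (Fin n))) hfix
    exact this
  refine ⟨x, xb.2, fun y hy => ?_⟩
  have hvar := hπvar (x - γ • G x) y hy
  rw [hπfix] at hvar
  have : x - γ • G x - x = -(γ • G x) := by abel
  rw [this, inner_neg_left, real_inner_smul_left] at hvar
  have h0 : 0 ≤ γ * ⟪G x, y - x⟫ := by linarith
  exact nonneg_of_mul_nonneg_right h0 hγ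

lemma exists_sol_mono {C : Set (EuclideanSpace ℝ (Fin n))} (hconv : Convex ℝ C)
    (hne : C.Nonempty) (hc : IsClosed C) (hcomp : IsCompact C)
    (G : EuclideanSpace ℝ (Fin n) → EuclideanSpace ℝ (Fin n)) (hGcont : Continuous G)
    (hm : ∀ x ∈ C, ∀ y ∈ C, 0 ≤ ⟪G y - G x, y - x⟫)
    {L : ℝ≥0} (hlip : LipschitzOnWith L G C) :
    ∃ x ∈ C, ∀ y ∈ C, 0 ≤ ⟪G x, y - x⟫ := by
  classical
  have hsols : ∀ k : ℕ, ∃ x ∈ C, ∀ y ∈ C, 0 ≤ ⟪G x + (1/(k+1:ℝ)) • x, y - x⟫ := by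
    intro k
    set ε : ℝ := 1/(k+1:ℝ) with hεdef
    have hε : 0 < ε := by positivity
    set Gk : EuclideanSpace ℝ (Fin n) → EuclideanSpace ℝ (Fin n) :=
      fun x => G x + ε • x with hGkdef
    have hsm : ∀ x ∈ C, ∀ y ∈ C, ε * ‖y - x‖^2 ≤ ⟪Gk y - Gk x, y - x⟫ := by
      intro x hx y hy
      have hexp : Gk y - Gk x = (G y - G x) + ε • (y - x) := by
        simp only [hGkdef, smul_sub]; abel
      rw [hexp, inner_add_left, real_inner_smul_left, real_inner_self_eq_norm_sq]
      have := hm x hx y hy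
      linarith
    have hlipk : LipschitzOnWith (L + ε.toNNReal) Gk C := by
      refine lipschitzOnWith_iff_dist_le_mul.2 fun x hx y hy => ?_
      have h1 := (lipschitzOnWith_iff_dist_le_mul.1 hlip) x hx y hy
      rw [dist_eq_norm, dist_eq_norm] at *
      have hexp : Gk x - Gk y = (G x - G y) + ε • (x - y) := by
        simp only [hGkdef, smul_sub]; abel
      rw [hexp]
      push_cast
      rw [Real.coe_toNNReal ε (le_of_lt hε)]
      calc ‖(G x - G y) + ε • (x - y)‖ ≤ ‖G x - G y‖ + ‖ε • (x - y)‖ := norm_add_le _ _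
        _ ≤ (L:ℝ) * ‖x - y‖ + ε * ‖x - y‖ := by
            rw [norm_smul, Real.norm_eq_abs, abs_of_pos hε]
            linarith
        _ = ((L:ℝ) + ε) * ‖x - y‖ := by ring
    exact exists_sol_strong hconv hne hc Gk hε hsm hlipk
  choose xs hxs hsol using hsols
  obtain ⟨xb, hxbC, φ, hφ, hconv'⟩ := hcomp.tendsto_subseq hxs
  refine ⟨xb, hxbC, fun y hy => ?_⟩
  have hlim : Tendsto (fun k => ⟪G (xs (φ k)) + (1/((φ k)+1:ℝ)) • (xs (φ k)), y - xs (φ k)⟫)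
      atTop (𝓝 ⟪G xb, y - xb⟫) := by
    have h1 : Tendsto (fun k => G (xs (φ k))) atTop (𝓝 (G xb)) :=
      ((hGcont.tendsto xb).comp hconv')
    have h2 : Tendsto (fun k => (1/((φ k)+1:ℝ))) atTop (𝓝 0) := by
      have hφtop : Tendsto (fun k => ((φ k : ℝ))) atTop atTop :=
        tendsto_natCast_atTop_atTop.comp hφ.tendsto_atTop
      have : Tendsto (fun k => ((φ k)+1:ℝ)) atTop atTop :=
        tendsto_atTop_add_const_right _ 1 hφtop
      simpa [one_div, Pi.inv_def] using this.inv_tendsto_atTop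
    have h3 : Tendsto (fun k => (1/((φ k)+1:ℝ)) • (xs (φ k))) atTop (𝓝 (0:EuclideanSpace ℝ (Fin n))) := by
      have := h2.smul hconv'
      simpa using this
    have h4 : Tendsto (fun k => G (xs (φ k)) + (1/((φ k)+1:ℝ)) • (xs (φ k))) atTop (𝓝 (G xb)) := by
      have := h1.add h3
      simpa using this
    have h5 : Tendsto (fun k => y - xs (φ k)) atTop (𝓝 (y - xb)) :=
      tendsto_const_nhds.sub hconv'
    exact h4.inner h5
  exact ge_of_tendsto hlim (Eventually.of_forall fun k => hsol (φ k) y hy)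

lemma exists_lipschitzOnWith_shifted {n : ℕ} (Q : Fin n → MvPolynomial (Fin n) ℝ)
    (p : EuclideanSpace ℝ (Fin n)) {s : Set (EuclideanSpace ℝ (Fin n))}
    (hconv : Convex ℝ s) (hcomp : IsCompact s) :
    ∃ L : ℝ≥0, LipschitzOnWith L (fun x => evalMap Q x + p) s := by
  rcases s.eq_empty_or_nonempty with rfl | hne
  · exact ⟨1, by simp⟩
  have hcd := contDiff_evalMap Q
  have hcont : Continuous fun x => ‖fderiv ℝ (evalMap Q) x‖₊ :=
    continuous_nnnorm.comp (hcd.continuous_fderiv (by simp))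
  obtain ⟨x₀, hx₀s, hx₀⟩ := hcomp.exists_isMaxOn hne hcont.continuousOn
  refine ⟨‖fderiv ℝ (evalMap Q) x₀‖₊, ?_⟩
  have h1 : LipschitzOnWith ‖fderiv ℝ (evalMap Q) x₀‖₊ (evalMap Q) s :=
    hconv.lipschitzOnWith_of_nnnorm_fderiv_le
      (fun x _ => (hcd.differentiable (by simp)) x) (fun x hx => hx₀ hx)
  refine lipschitzOnWith_iff_dist_le_mul.2 fun x hx y hy => ?_
  have := (lipschitzOnWith_iff_dist_le_mul.1 h1) x hx y hy
  rw [dist_eq_norm, add_sub_add_right_eq_sub, ← dist_eq_norm]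
  exact this

/-- solution of truncated problem with interior norm solves full problem -/
lemma sol_untruncate {n : ℕ} {K : Set (EuclideanSpace ℝ (Fin n))} (hKconv : Convex ℝ K)
    {G : EuclideanSpace ℝ (Fin n) → EuclideanSpace ℝ (Fin n)} {ρ : ℝ}
    {x : EuclideanSpace ℝ (Fin n)}
    (hx : x ∈ Sol (K ∩ Metric.closedBall 0 ρ) G) (hxρ : ‖x‖ < ρ) :
    x ∈ Sol K G := by
  obtain ⟨⟨hxK, _⟩, hvar⟩ := hx
  refine ⟨hxK, fun y hy => ?_⟩
  set t : ℝ := min 1 ((ρ - ‖x‖)/(‖y - x‖ + 1)) with htdef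
  have hyx : (0:ℝ) < ‖y - x‖ + 1 := by positivity
  have ht0 : 0 < t := lt_min one_pos (div_pos (by linarith) hyx)
  have ht1 : t ≤ 1 := min_le_left _ _
  set z : EuclideanSpace ℝ (Fin n) := x + t • (y - x) with hzdef
  have hzK : z ∈ K := by
    have : z = (1 - t) • x + t • y := by rw [hzdef]; rw [smul_sub]; module
    rw [this]
    exact hKconv hxK hy (by linarith) (le_of_lt ht0) (by ring)
  have hzball : z ∈ Metric.closedBall 0 ρ := by
    rw [Metric.mem_closedBall, dist_zero_right]
    have h1 : ‖z‖ ≤ ‖x‖ + t * ‖y - x‖ := by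
      calc ‖z‖ ≤ ‖x‖ + ‖t • (y - x)‖ := norm_add_le _ _
        _ = ‖x‖ + t * ‖y - x‖ := by rw [norm_smul, Real.norm_eq_abs, abs_of_pos ht0]
    have h2 : t * ‖y - x‖ ≤ ρ - ‖x‖ := by
      have h3 : t ≤ (ρ - ‖x‖)/(‖y - x‖ + 1) := min_le_right _ _
      have h4 : t * ‖y - x‖ ≤ (ρ - ‖x‖)/(‖y - x‖ + 1) * ‖y - x‖ :=
        mul_le_mul_of_nonneg_right h3 (norm_nonneg _)
      have h5 : (ρ - ‖x‖)/(‖y - x‖ + 1) * ‖y - x‖ ≤ (ρ - ‖x‖) := by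
        rw [div_mul_eq_mul_div, div_le_iff₀ hyx]
        nlinarith [norm_nonneg (y - x)]
      linarith
    linarith
  have := hvar z ⟨hzK, hzball⟩
  have hz : z - x = t • (y - x) := by rw [hzdef]; abel
  rw [hz, real_inner_smul_right] at this
  exact nonneg_of_mul_nonneg_right this ht0

lemma recessionCone_smul {n : ℕ} {K : Set (EuclideanSpace ℝ (Fin n))}
    {w : EuclideanSpace ℝ (Fin n)} (hw : w ∈ recessionCone K) {c : ℝ} (hc : 0 ≤ c) :
    c • w ∈ recessionCone K := by
  intro x hx t ht
  have h := hw x hx (t * c) (mul_nonneg ht hc)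
  rwa [smul_smul]

lemma zero_mem_recessionCone {n : ℕ} {K : Set (EuclideanSpace ℝ (Fin n))} :
    (0 : EuclideanSpace ℝ (Fin n)) ∈ recessionCone K := by
  intro x hx t ht
  simpa using hx

lemma sol_bound {n : ℕ} (K : Set (EuclideanSpace ℝ (Fin n)))
    (hK0 : (0 : EuclideanSpace ℝ (Fin n)) ∈ K) (hKc : IsClosed K) (hKconv : Convex ℝ K)
    (d : ℕ) (hd : 0 < d) (P : Fin n → MvPolynomial (Fin n) ℝ)
    (hPdeg : ∀ i, (P i).totalDegree ≤ d)
    (hmono : ∀ x ∈ K, ∀ y ∈ K, x ≠ y → 0 < ⟪evalMap P y - evalMap P x, y - x⟫)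
    (hR0 : Sol (recessionCone K) (evalMap (leadTerm d P)) = {0}) (M : ℝ) :
    ∃ R : ℝ, 0 < R ∧ ∀ p : EuclideanSpace ℝ (Fin n), ‖p‖ ≤ M → ∀ ρ : ℝ,
      ∀ x ∈ Sol (K ∩ Metric.closedBall 0 ρ) (fun z => evalMap P z + p), ‖x‖ < R := by
  by_contra hcon
  push_neg at hcon
  have hseq : ∀ k : ℕ, ∃ p ρ x, ‖p‖ ≤ M ∧
      x ∈ Sol (K ∩ Metric.closedBall 0 ρ) (fun z => evalMap P z + p) ∧ (k+1:ℝ) ≤ ‖x‖ := by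
    intro k
    obtain ⟨p, hp, ρ, x, hx, hR⟩ := hcon (k+1:ℝ) (by positivity)
    exact ⟨p, ρ, x, hp, hx, hR⟩
  choose ps ρs xs hps hxs hxnorm using hseq
  set t : ℕ → ℝ := fun k => ‖xs k‖ with htdef
  have ht1 : ∀ k, 1 ≤ t k := by
    intro k
    have h1 : (1:ℝ) ≤ (k+1:ℝ) := le_add_of_nonneg_left (Nat.cast_nonneg k)
    exact le_trans h1 (hxnorm k)
  have htpos : ∀ k, 0 < t k := fun k => lt_of_lt_of_le one_pos (ht1 k)
  have htop : Tendsto t atTop atTop := by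
    refine tendsto_atTop_mono (fun k => hxnorm k) ?_
    exact tendsto_atTop_add_const_right _ 1 tendsto_natCast_atTop_atTop
  set u : ℕ → EuclideanSpace ℝ (Fin n) := fun k => (t k)⁻¹ • xs k with hudef
  have hu1 : ∀ k, u k ∈ Metric.sphere (0 : EuclideanSpace ℝ (Fin n)) 1 := by
    intro k
    rw [mem_sphere_zero_iff_norm, hudef]
    rw [norm_smul, Real.norm_eq_abs, abs_of_pos (inv_pos.2 (htpos k))]
    exact inv_mul_cancel₀ (ne_of_gt (htpos k))
  obtain ⟨v, hvs, φ, hφ, hulim⟩ := (isCompact_sphere (0 : EuclideanSpace ℝ (Fin n)) 1).tendsto_subseq hu1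
  have hv1 : ‖v‖ = 1 := mem_sphere_zero_iff_norm.1 hvs
  have ht' : Tendsto (fun k => t (φ k)) atTop atTop := htop.comp hφ.tendsto_atTop
  have hxK : ∀ k, xs k ∈ K := fun k => (hxs k).1.1
  have hxball : ∀ k, t k ≤ ρs k := by
    intro k
    have := (hxs k).1.2
    rwa [Metric.mem_closedBall, dist_zero_right] at this
  have hvar : ∀ k, ∀ y ∈ K ∩ Metric.closedBall 0 (ρs k),
      0 ≤ ⟪evalMap P (xs k) + ps k, y - xs k⟫ := fun k => (hxs k).2
  have hxeq : ∀ k, xs k = t k • u k := by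
    intro k
    rw [hudef, smul_inv_smul₀ (ne_of_gt (htpos k))]
  -- v is in the recession cone
  have hvrec : v ∈ recessionCone K := by
    intro x hx τ hτ
    have hmem : ∀ᶠ k in atTop, x + (τ / t (φ k)) • (xs (φ k) - x) ∈ K := by
      filter_upwards [ht'.eventually_ge_atTop τ] with k hk
      have htk := htpos (φ k)
      have h01 : 0 ≤ τ / t (φ k) := div_nonneg hτ htk.le
      have h11 : τ / t (φ k) ≤ 1 := div_le_one_of_le₀ hk htk.le
      have heq : x + (τ / t (φ k)) • (xs (φ k) - x)
          = (1 - τ / t (φ k)) • x + (τ / t (φ k)) • xs (φ k) := by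
        rw [smul_sub]; module
      rw [heq]
      exact hKconv hx (hxK (φ k)) (by linarith) h01 (by ring)
    have hlim : Tendsto (fun k => x + (τ / t (φ k)) • (xs (φ k) - x)) atTop
        (𝓝 (x + τ • v)) := by
      have heq : ∀ k, x + (τ / t (φ k)) • (xs (φ k) - x)
          = x + τ • u (φ k) - (τ / t (φ k)) • x := by
        intro k
        rw [hxeq (φ k), hudef, smul_sub, smul_smul, smul_smul, smul_smul]
        have : τ / t (φ k) * t (φ k) = τ := div_mul_cancel₀ τ (ne_of_gt (htpos (φ k)))
        rw [this]
        have h2 : τ * (t (φ k))⁻¹ = τ / t (φ k) := (div_eq_mul_inv τ _).symm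
        rw [h2]
        abel
      rw [tendsto_congr heq]
      have h1 : Tendsto (fun k => τ • u (φ k)) atTop (𝓝 (τ • v)) := hulim.const_smul τ
      have h2 : Tendsto (fun k => (τ / t (φ k)) • x) atTop (𝓝 (0 : EuclideanSpace ℝ (Fin n))) := by
        have h3 : Tendsto (fun k => τ / t (φ k)) atTop (𝓝 0) :=
          Tendsto.div_atTop tendsto_const_nhds ht'
        have := h3.smul_const x
        simpa using this
      have := ((tendsto_const_nhds : Tendsto (fun _ : ℕ => x) atTop (𝓝 x)).add h1).sub h2
      simpa using this
    exact hKc.mem_of_tendsto hlim hmem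
  -- limit of normalized maps
  set Gv : EuclideanSpace ℝ (Fin n) := evalMap (leadTerm d P) v with hGvdef
  have hFlim : Tendsto (fun k => (t (φ k) ^ d)⁻¹ • evalMap P (xs (φ k))) atTop (𝓝 Gv) := by
    have h := tendsto_evalMap_leading d P hPdeg ht' hulim
    refine h.congr fun k => ?_
    simp only [Function.comp_apply]
    rw [← hxeq (φ k)]
  have hplim : Tendsto (fun k => (t (φ k) ^ d)⁻¹ • ps (φ k)) atTop
      (𝓝 (0 : EuclideanSpace ℝ (Fin n))) := by
    have hb : ∀ k, ‖(t (φ k) ^ d)⁻¹ • ps (φ k)‖ ≤ M * (t (φ k) ^ d)⁻¹ := by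
      intro k
      rw [norm_smul, Real.norm_eq_abs, abs_of_pos (inv_pos.2 (pow_pos (htpos (φ k)) d))]
      rw [mul_comm]
      exact mul_le_mul_of_nonneg_right (hps (φ k)) (le_of_lt (inv_pos.2 (pow_pos (htpos (φ k)) d)))
    refine squeeze_zero_norm hb ?_
    have h1 : Tendsto (fun k => (t (φ k) ^ d)⁻¹) atTop (𝓝 0) := by
      have : Tendsto (fun k => t (φ k) ^ d) atTop atTop :=
        (tendsto_pow_atTop hd.ne').comp ht'
      exact this.inv_tendsto_atTop
    have := h1.const_mul M
    simpa using this
  have hAlim : Tendsto (fun k => (t (φ k) ^ d)⁻¹ • (evalMap P (xs (φ k)) + ps (φ k)))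
      atTop (𝓝 Gv) := by
    have h := hFlim.add hplim
    rw [add_zero] at h
    refine h.congr fun k => ?_
    rw [smul_add]
  -- key inequality for recession directions of norm at most one
  have hkey : ∀ w ∈ recessionCone K, ‖w‖ ≤ 1 → 0 ≤ ⟪Gv, w - v⟫ := by
    intro w hw hwn
    have hterm : ∀ k, 0 ≤ ⟪(t (φ k) ^ d)⁻¹ • (evalMap P (xs (φ k)) + ps (φ k)), w - u (φ k)⟫ := by
      intro k
      set m := φ k
      have hyK : t m • w ∈ K := by
        have := hw 0 hK0 (t m) (le_of_lt (htpos m))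
        simpa using this
      have hyball : t m • w ∈ Metric.closedBall (0 : EuclideanSpace ℝ (Fin n)) (ρs m) := by
        rw [Metric.mem_closedBall, dist_zero_right, norm_smul, Real.norm_eq_abs,
          abs_of_pos (htpos m)]
        calc t m * ‖w‖ ≤ t m * 1 := mul_le_mul_of_nonneg_left hwn (le_of_lt (htpos m))
          _ = t m := mul_one _
          _ ≤ ρs m := hxball m
      have h0 := hvar m (t m • w) ⟨hyK, hyball⟩
      have heq : t m • w - xs m = t m • (w - u m) := by
        rw [hxeq m, smul_sub]
      rw [heq, real_inner_smul_right] at h0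
      have h1 : 0 ≤ ⟪evalMap P (xs m) + ps m, w - u m⟫ :=
        nonneg_of_mul_nonneg_right h0 (htpos m)
      rw [real_inner_smul_left]
      exact mul_nonneg (le_of_lt (inv_pos.2 (pow_pos (htpos m) d))) h1
    have hlim2 : Tendsto (fun k => ⟪(t (φ k) ^ d)⁻¹ • (evalMap P (xs (φ k)) + ps (φ k)), w - u (φ k)⟫)
        atTop (𝓝 ⟪Gv, w - v⟫) :=
      hAlim.inner (tendsto_const_nhds.sub hulim)
    exact ge_of_tendsto hlim2 (Eventually.of_forall hterm)
  -- inner product with v is nonnegative by monotonicity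
  have hcv_nonneg : 0 ≤ ⟪Gv, v⟫ := by
    have hF0lim : Tendsto (fun k => (t (φ k) ^ d)⁻¹ • (evalMap P (xs (φ k)) - evalMap P 0))
        atTop (𝓝 Gv) := by
      have h0 : Tendsto (fun k => (t (φ k) ^ d)⁻¹ • evalMap P (0 : EuclideanSpace ℝ (Fin n)))
          atTop (𝓝 (0 : EuclideanSpace ℝ (Fin n))) := by
        have hb : ∀ k, ‖(t (φ k) ^ d)⁻¹ • evalMap P (0 : EuclideanSpace ℝ (Fin n))‖
            ≤ ‖evalMap P (0 : EuclideanSpace ℝ (Fin n))‖ * (t (φ k) ^ d)⁻¹ := by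
          intro k
          rw [norm_smul, Real.norm_eq_abs, abs_of_pos (inv_pos.2 (pow_pos (htpos (φ k)) d)),
            mul_comm]
        refine squeeze_zero_norm hb ?_
        have h1 : Tendsto (fun k => (t (φ k) ^ d)⁻¹) atTop (𝓝 0) := by
          have : Tendsto (fun k => t (φ k) ^ d) atTop atTop :=
            (tendsto_pow_atTop hd.ne').comp ht'
          exact this.inv_tendsto_atTop
        have := h1.const_mul ‖evalMap P (0 : EuclideanSpace ℝ (Fin n))‖
        simpa using this
      have h := hFlim.sub h0
      rw [sub_zero] at h
      refine h.congr fun k => ?_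
      rw [smul_sub]
    have hterm : ∀ k, 0 ≤ ⟪(t (φ k) ^ d)⁻¹ • (evalMap P (xs (φ k)) - evalMap P 0), u (φ k)⟫ := by
      intro k
      set m := φ k
      have hne : xs m ≠ 0 := by
        intro h
        have := ht1 m
        rw [htdef] at this
        simp only [h, norm_zero] at this
        linarith
      have h1 := hmono 0 hK0 (xs m) (hxK m) (Ne.symm hne)
      rw [sub_zero] at h1
      rw [hudef, real_inner_smul_left, real_inner_smul_right]
      have h2 : 0 ≤ (t m)⁻¹ * ⟪evalMap P (xs m) - evalMap P 0, xs m⟫ :=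
        mul_nonneg (le_of_lt (inv_pos.2 (htpos m))) (le_of_lt h1)
      exact mul_nonneg (le_of_lt (inv_pos.2 (pow_pos (htpos m) d))) h2
    have hlim3 : Tendsto (fun k => ⟪(t (φ k) ^ d)⁻¹ • (evalMap P (xs (φ k)) - evalMap P 0), u (φ k)⟫)
        atTop (𝓝 ⟪Gv, v⟫) := hF0lim.inner hulim
    exact ge_of_tendsto hlim3 (Eventually.of_forall hterm)
  have hcv_le : ⟪Gv, v⟫ ≤ 0 := by
    have := hkey 0 zero_mem_recessionCone (by simp)
    rw [zero_sub, inner_neg_right] at this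
    linarith
  have hcv : ⟪Gv, v⟫ = 0 := le_antisymm hcv_le hcv_nonneg
  -- v solves the recession problem
  have hvsol : v ∈ Sol (recessionCone K) (evalMap (leadTerm d P)) := by
    refine ⟨hvrec, fun w hw => ?_⟩
    rw [inner_sub_right, ← hGvdef, hcv, sub_zero]
    rcases eq_or_ne w 0 with rfl | hwne
    · rw [inner_zero_right]
    · have hnw : 0 < ‖w‖ := norm_pos_iff.2 hwne
      have hw' : ‖w‖⁻¹ • w ∈ recessionCone K :=
        recessionCone_smul hw (le_of_lt (inv_pos.2 hnw))
      have hw'n : ‖(‖w‖⁻¹ • w)‖ ≤ 1 := by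
        rw [norm_smul, Real.norm_eq_abs, abs_of_pos (inv_pos.2 hnw), inv_mul_cancel₀ (ne_of_gt hnw)]
      have := hkey _ hw' hw'n
      rw [inner_sub_right, hcv, sub_zero, real_inner_smul_right] at this
      have h2 := nonneg_of_mul_nonneg_right this (inv_pos.2 hnw)
      exact h2
  rw [hR0] at hvsol
  have : v = 0 := hvsol
  rw [this, norm_zero] at hv1
  linarith

lemma sol_unique {n : ℕ} {K : Set (EuclideanSpace ℝ (Fin n))}
    {P : Fin n → MvPolynomial (Fin n) ℝ}
    (hmono : ∀ x ∈ K, ∀ y ∈ K, x ≠ y → 0 < ⟪evalMap P y - evalMap P x, y - x⟫)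
    {p x₁ x₂ : EuclideanSpace ℝ (Fin n)}
    (h1 : x₁ ∈ Sol K (fun z => evalMap P z + p)) (h2 : x₂ ∈ Sol K (fun z => evalMap P z + p)) :
    x₁ = x₂ := by
  by_contra hne
  have a1 := h1.2 x₂ h2.1
  have a2 := h2.2 x₁ h1.1
  have hm := hmono x₁ h1.1 x₂ h2.1 hne
  have e : ⟪evalMap P x₂ - evalMap P x₁, x₂ - x₁⟫
      = ⟪evalMap P x₂ + p, x₂ - x₁⟫ - ⟪evalMap P x₁ + p, x₂ - x₁⟫ := by
    rw [← inner_sub_left]; congr 1; abel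
  have e2 : ⟪evalMap P x₂ + p, x₂ - x₁⟫ = - ⟪evalMap P x₂ + p, x₁ - x₂⟫ := by
    rw [← inner_neg_right]; congr 1; abel
  rw [e, e2] at hm
  linarith

lemma exists_sol {n : ℕ} (K : Set (EuclideanSpace ℝ (Fin n)))
    (hK0 : (0 : EuclideanSpace ℝ (Fin n)) ∈ K) (hKc : IsClosed K) (hKconv : Convex ℝ K)
    (d : ℕ) (hd : 0 < d) (P : Fin n → MvPolynomial (Fin n) ℝ)
    (hPdeg : ∀ i, (P i).totalDegree ≤ d)
    (hmono : ∀ x ∈ K, ∀ y ∈ K, x ≠ y → 0 < ⟪evalMap P y - evalMap P x, y - x⟫)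
    (hR0 : Sol (recessionCone K) (evalMap (leadTerm d P)) = {0})
    (p : EuclideanSpace ℝ (Fin n)) :
    ∃ x, x ∈ Sol K (fun z => evalMap P z + p) := by
  obtain ⟨R, hR, hbound⟩ := sol_bound K hK0 hKc hKconv d hd P hPdeg hmono hR0 ‖p‖
  set C : Set (EuclideanSpace ℝ (Fin n)) := K ∩ Metric.closedBall 0 R with hCdef
  have hCconv : Convex ℝ C := hKconv.inter (convex_closedBall 0 R)
  have hCne : C.Nonempty := ⟨0, hK0, Metric.mem_closedBall_self (le_of_lt hR)⟩
  have hCc : IsClosed C := hKc.inter Metric.isClosed_closedBall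
  have hCb : IsBounded C := Metric.isBounded_closedBall.subset Set.inter_subset_right
  have hCcomp : IsCompact C := Metric.isCompact_of_isClosed_isBounded hCc hCb
  obtain ⟨L, hlip⟩ := exists_lipschitzOnWith_shifted P p hCconv hCcomp
  have hGc : Continuous (fun z => evalMap P z + p) :=
    (continuous_evalMap P).add continuous_const
  have hm : ∀ x ∈ C, ∀ y ∈ C,
      0 ≤ ⟪(evalMap P y + p) - (evalMap P x + p), y - x⟫ := by
    intro x hx y hy
    rcases eq_or_ne x y with rfl | hne
    · simp
    · rw [add_sub_add_right_eq_sub]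
      exact le_of_lt (hmono x hx.1 y hy.1 hne)
  obtain ⟨x, hxC, hxsol⟩ := exists_sol_mono hCconv hCne hCc hCcomp _ hGc hm hlip
  have hxSolC : x ∈ Sol C (fun z => evalMap P z + p) := ⟨hxC, hxsol⟩
  have hxR : ‖x‖ < R := hbound p (le_refl _) R x hxSolC
  exact ⟨x, sol_untruncate hKconv hxSolC hxR⟩

theorem stmt14 {n : ℕ} (K : Set (EuclideanSpace ℝ (Fin n)))
    (hK0 : (0 : EuclideanSpace ℝ (Fin n)) ∈ K) (hKc : IsClosed K) (hKconv : Convex ℝ K)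
    (d : ℕ) (hd : 0 < d)
    (P : Fin n → MvPolynomial (Fin n) ℝ)
    (hPdeg : ∀ i, (P i).totalDegree ≤ d) (hPd : ∃ i, (P i).totalDegree = d)
    (hmono : ∀ x ∈ K, ∀ y ∈ K, x ≠ y → 0 < ⟪evalMap P y - evalMap P x, y - x⟫)
    (hR0 : Sol (recessionCone K) (evalMap (leadTerm d P)) = {0}) :
    ∃ s : EuclideanSpace ℝ (Fin n) → EuclideanSpace ℝ (Fin n),
      Continuous s ∧ ∀ p, Sol K (fun x => evalMap P x + p) = {s p} := by
  classical
  have hex : ∀ p, ∃ x, x ∈ Sol K (fun z => evalMap P z + p) :=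
    exists_sol K hK0 hKc hKconv d hd P hPdeg hmono hR0
  choose s hs using hex
  have huniq : ∀ p x, x ∈ Sol K (fun z => evalMap P z + p) → x = s p :=
    fun p x hx => sol_unique hmono hx (hs p)
  have hSol_eq : ∀ p, Sol K (fun x => evalMap P x + p) = {s p} := by
    intro p
    ext x
    constructor
    · intro hx
      exact huniq p x hx
    · intro hx
      rw [Set.mem_singleton_iff] at hx
      rw [hx]
      exact hs p
  refine ⟨s, ?_, hSol_eq⟩
  rw [continuous_iff_seqContinuous]
  intro pk p hp
  obtain ⟨Mr, hMr⟩ := (Metric.isBounded_iff_subset_closedBall 0).1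
    (Metric.isBounded_range_of_tendsto pk hp)
  set M : ℝ := max Mr ‖p‖ with hMdef
  have hpk : ∀ k, ‖pk k‖ ≤ M := by
    intro k
    have := hMr (Set.mem_range_self k)
    rw [Metric.mem_closedBall, dist_zero_right] at this
    exact le_trans this (le_max_left _ _)
  obtain ⟨R, hR, hbound⟩ := sol_bound K hK0 hKc hKconv d hd P hPdeg hmono hR0 M
  have hsk_bound : ∀ k, ‖s (pk k)‖ < R := by
    intro k
    refine hbound (pk k) (hpk k) ‖s (pk k)‖ (s (pk k)) ?_
    refine ⟨⟨(hs (pk k)).1, ?_⟩, fun y hy => (hs (pk k)).2 y hy.1⟩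
    rw [Metric.mem_closedBall, dist_zero_right]
  -- conclude convergence
  rw [Metric.tendsto_atTop]
  by_contra hnot
  push_neg at hnot
  obtain ⟨ε, hε, hfreq⟩ := hnot
  have hfreq' : ∀ N, ∃ k ≥ N, ε ≤ dist ((s ∘ pk) k) (s p) := hfreq
  obtain ⟨φ, hφmono, hφ⟩ := Filter.extraction_of_frequently_atTop
    (Filter.frequently_atTop.2 hfreq')
  set C : Set (EuclideanSpace ℝ (Fin n)) := K ∩ Metric.closedBall 0 R with hCdef
  have hCcomp : IsCompact C :=
    Metric.isCompact_of_isClosed_isBounded (hKc.inter Metric.isClosed_closedBall)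
      (Metric.isBounded_closedBall.subset Set.inter_subset_right)
  have hyC : ∀ k, s (pk (φ k)) ∈ C := by
    intro k
    refine ⟨(hs (pk (φ k))).1, ?_⟩
    rw [Metric.mem_closedBall, dist_zero_right]
    exact le_of_lt (hsk_bound (φ k))
  obtain ⟨xb, hxbC, θ, hθmono, hθlim⟩ := hCcomp.tendsto_subseq hyC
  have hplim : Tendsto (fun k => pk (φ (θ k))) atTop (𝓝 p) :=
    hp.comp ((hφmono.comp hθmono).tendsto_atTop)
  have hxbsol : xb ∈ Sol K (fun z => evalMap P z + p) := by
    refine ⟨hxbC.1, fun y hy => ?_⟩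
    have hterm : ∀ k, 0 ≤ ⟪evalMap P (s (pk (φ (θ k)))) + pk (φ (θ k)), y - s (pk (φ (θ k)))⟫ :=
      fun k => (hs (pk (φ (θ k)))).2 y hy
    have hylim : Tendsto (fun k => s (pk (φ (θ k)))) atTop (𝓝 xb) := hθlim
    have hlim : Tendsto (fun k => ⟪evalMap P (s (pk (φ (θ k)))) + pk (φ (θ k)), y - s (pk (φ (θ k)))⟫)
        atTop (𝓝 ⟪evalMap P xb + p, y - xb⟫) := by
      have h1 : Tendsto (fun k => evalMap P (s (pk (φ (θ k)))) + pk (φ (θ k))) atTop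
          (𝓝 (evalMap P xb + p)) :=
        (((continuous_evalMap P).tendsto xb).comp hylim).add hplim
      exact h1.inner (tendsto_const_nhds.sub hylim)
    exact ge_of_tendsto hlim (Eventually.of_forall hterm)
  have hxb_eq : xb = s p := huniq p xb hxbsol
  have hdist : Tendsto (fun k => dist (s (pk (φ (θ k)))) (s p)) atTop (𝓝 0) := by
    rw [← hxb_eq]
    exact tendsto_iff_dist_tendsto_zero.1 hθlim
  have hev : ∀ᶠ k in atTop, dist (s (pk (φ (θ k)))) (s p) < ε :=
    (hdist.eventually (eventually_lt_nhds hε))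
  obtain ⟨k, hk⟩ := hev.exists
  exact absurd (hφ (θ k)) (not_le.2 hk)
end
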